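/- (Corollary 2.3, bounded-entry case.) Suppose H₂ ≠ {0}, let c = max σ(C), and suppose a, b ≥ 0 satisfy ‖B*x‖² ≤ a·Re⟨Ax, x⟩ + b·‖x‖² for all x ∈ H₁. Let μ₁, μ₂ ∈ σ(A) with a + c < μ₁ < μ₂, suppose the open interval (μ₁, μ₂) contains no point of σ(A), and suppose (μ₂ − c)² > 4(aμ₂ + b). Define α₁⁺ = (μ₁ + c + 2a)/2 + √(((μ₁ − c)/2)² + a(a + c) + b) and β₂± = (μ₂ + c)/2 ± √(((μ₂ − c)/2)² − (aμ₂ + b)). If β₂⁻ < (μ₁ + μ₂)/2 and α₁⁺ < β₂⁺, then μ₁ ≤ α₁⁺ < β₂⁺ ≤ μ₂ and no real λ with α₁⁺ < λ < β₂⁺ belongs to σ(M). -/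

import Mathlib

/-
For `c < λ` the resolvent `R = (λ - C)⁻¹` exists, and by the Frobenius–Schur factorisation
`λ - M` is invertible as soon as the Schur complement `S(λ) = λ - A - B R B*` is. Let `P` be the
spectral projection of `A` for `(-∞, μ₁]`; because of the gap, `A ≥ μ₂` on the range of `1 - P`.
Since `0 ≤ R ≤ (λ - c)⁻¹`, the relative bound on `B*` gives
`(λ - c) S(λ) ≥ (λ - μ₁)(λ - c) - (a μ₁ + b) > 0` on the range of `P` as soon as `λ > α₁⁺`, while
`S(λ) ≤ λ - μ₂ < 0` on the range of `1 - P`. A self-adjoint operator that is uniformly definite,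
with opposite signs, on two complementary orthogonal subspaces is invertible: with the symmetry
`J = 2P - 1`, the operator `J S(λ)` is coercive. Finally `a μ₁ + b ≥ 0` because `μ₁ ∈ σ(A)` and
`a A + b ≥ B B* ≥ 0`, which places `α₁⁺` and `β₂⁺` inside `[μ₁, μ₂]`.
-/

open ContinuousLinearMap

variable {H₁ H₂ : Type*}
  [NormedAddCommGroup H₁] [InnerProductSpace ℂ H₁] [CompleteSpace H₁]
  [NormedAddCommGroup H₂] [InnerProductSpace ℂ H₂] [CompleteSpace H₂]

/-- The block operator matrix `M(x,y) = (A x + B y, B* x + C y)` on the Hilbert-space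
direct sum `H₁ ⊕ H₂` (realised as `WithLp 2 (H₁ × H₂)`). -/
noncomputable def blockOp (A : H₁ →L[ℂ] H₁) (B : H₂ →L[ℂ] H₁) (C : H₂ →L[ℂ] H₂) :
    WithLp 2 (H₁ × H₂) →L[ℂ] WithLp 2 (H₁ × H₂) :=
  (((WithLp.prodContinuousLinearEquiv 2 ℂ H₁ H₂).symm :
      (H₁ × H₂) →L[ℂ] WithLp 2 (H₁ × H₂)) ∘L
    ((A ∘L ContinuousLinearMap.fst ℂ H₁ H₂ + B ∘L ContinuousLinearMap.snd ℂ H₁ H₂).prod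
      ((ContinuousLinearMap.adjoint B) ∘L ContinuousLinearMap.fst ℂ H₁ H₂
        + C ∘L ContinuousLinearMap.snd ℂ H₁ H₂))) ∘L
    ((WithLp.prodContinuousLinearEquiv 2 ℂ H₁ H₂) :
      WithLp 2 (H₁ × H₂) →L[ℂ] (H₁ × H₂))

open scoped InnerProductSpace

namespace ContinuousLinearMap

section BlockMatrix

variable {𝕜 E F : Type*} [NontriviallyNormedField 𝕜]
  [NormedAddCommGroup E] [NormedSpace 𝕜 E] [NormedAddCommGroup F] [NormedSpace 𝕜 F]

noncomputable def blockMatrix (A : E →L[𝕜] E) (B : F →L[𝕜] E) (C : E →L[𝕜] F)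
    (D : F →L[𝕜] F) : WithLp 2 (E × F) →L[𝕜] WithLp 2 (E × F) :=
  ((WithLp.prodContinuousLinearEquiv 2 𝕜 E F).symm : (E × F) →L[𝕜] WithLp 2 (E × F)) ∘L
    ((A ∘L fst 𝕜 E F + B ∘L snd 𝕜 E F).prod (C ∘L fst 𝕜 E F + D ∘L snd 𝕜 E F)) ∘L
    ((WithLp.prodContinuousLinearEquiv 2 𝕜 E F) : WithLp 2 (E × F) →L[𝕜] (E × F))

variable {A : E →L[𝕜] E} {B : F →L[𝕜] E} {C : E →L[𝕜] F} {D : F →L[𝕜] F}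

@[simp]
lemma blockMatrix_apply_fst (z : WithLp 2 (E × F)) :
    (blockMatrix A B C D z).fst = A z.fst + B z.snd := rfl

@[simp]
lemma blockMatrix_apply_snd (z : WithLp 2 (E × F)) :
    (blockMatrix A B C D z).snd = C z.fst + D z.snd := rfl

lemma ext_withLp_prod {T T' : WithLp 2 (E × F) →L[𝕜] WithLp 2 (E × F)}
    (h₁ : ∀ z, (T z).fst = (T' z).fst) (h₂ : ∀ z, (T z).snd = (T' z).snd) : T = T' :=
  ext fun z => WithLp.ofLp_injective 2 (Prod.ext (h₁ z) (h₂ z))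

lemma isUnit_blockMatrix_diag (hA : IsUnit A) (hD : IsUnit D) :
    IsUnit (blockMatrix A 0 0 D) := by
  obtain ⟨u, rfl⟩ := hA
  obtain ⟨v, rfl⟩ := hD
  have hu (x : E) : (u : E →L[𝕜] E) ((↑u⁻¹ : E →L[𝕜] E) x) = x ∧
      (↑u⁻¹ : E →L[𝕜] E) ((u : E →L[𝕜] E) x) = x := by
    simp [← mul_apply_eq_comp]
  have hv (y : F) : (v : F →L[𝕜] F) ((↑v⁻¹ : F →L[𝕜] F) y) = y ∧
      (↑v⁻¹ : F →L[𝕜] F) ((v : F →L[𝕜] F) y) = y := by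
    simp [← mul_apply_eq_comp]
  refine ⟨⟨blockMatrix ↑u 0 0 ↑v, blockMatrix ↑u⁻¹ 0 0 ↑v⁻¹, ?_, ?_⟩, rfl⟩ <;>
    exact ext_withLp_prod (fun z => by simp [hu]) (fun z => by simp [hv])

lemma isUnit_blockMatrix_upper (X : F →L[𝕜] E) : IsUnit (blockMatrix 1 X 0 1) :=
  ⟨⟨blockMatrix 1 X 0 1, blockMatrix 1 (-X) 0 1,
    ext_withLp_prod (fun z => by simp) (fun z => by simp),
    ext_withLp_prod (fun z => by simp) (fun z => by simp)⟩, rfl⟩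

lemma isUnit_blockMatrix_lower (Y : E →L[𝕜] F) : IsUnit (blockMatrix 1 0 Y 1) :=
  ⟨⟨blockMatrix 1 0 Y 1, blockMatrix 1 0 (-Y) 1,
    ext_withLp_prod (fun z => by simp) (fun z => by simp),
    ext_withLp_prod (fun z => by simp) (fun z => by simp)⟩, rfl⟩

theorem isUnit_blockMatrix_of_isUnit_schur (hD : IsUnit D)
    (hS : IsUnit (A - B ∘L Ring.inverse D ∘L C)) : IsUnit (blockMatrix A B C D) := by
  have hRD (y : F) : Ring.inverse D (D y) = y := by
    rw [← mul_apply_eq_comp, Ring.inverse_mul_cancel D hD, one_apply_eq_self]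
  have hDR (y : F) : D (Ring.inverse D y) = y := by
    rw [← mul_apply_eq_comp, Ring.mul_inverse_cancel D hD, one_apply_eq_self]
  have frobenius : blockMatrix A B C D =
      blockMatrix 1 (B ∘L Ring.inverse D) 0 1 *
        (blockMatrix (A - B ∘L Ring.inverse D ∘L C) 0 0 D *
          blockMatrix 1 0 (Ring.inverse D ∘L C) 1) :=
    ext_withLp_prod (fun z => by simp [hRD]; abel) (fun z => by simp [hDR])
  rw [frobenius]
  exact (isUnit_blockMatrix_upper _).mul
    ((isUnit_blockMatrix_diag hS hD).mul (isUnit_blockMatrix_lower _))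

end BlockMatrix

end ContinuousLinearMap

section Hilbert

variable {E : Type*} [NormedAddCommGroup E] [InnerProductSpace ℂ E]

lemma IsSelfAdjoint.inner_apply_left [CompleteSpace E] {T : E →L[ℂ] E} (hT : IsSelfAdjoint T)
    (x y : E) : ⟪T x, y⟫_ℂ = ⟪x, T y⟫_ℂ := by
  simpa using hT.isSymmetric x y

lemma re_inner_real_smul_left (r : ℝ) (x y : E) :
    (⟪r • x, y⟫_ℂ).re = r * (⟪x, y⟫_ℂ).re := by
  simp [← Complex.coe_smul, mul_comm]

-- `inner_self_eq_norm_sq` is stated with `RCLike.re`; this form rewrites `(⟪x, x⟫_ℂ).re`.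
lemma re_inner_self_eq_norm_sq (x : E) : (⟪x, x⟫_ℂ).re = ‖x‖ ^ 2 :=
  inner_self_eq_norm_sq (𝕜 := ℂ) x

lemma re_inner_apply_le_of_le {T T' : E →L[ℂ] E} (h : T ≤ T') (x : E) :
    (⟪T x, x⟫_ℂ).re ≤ (⟪T' x, x⟫_ℂ).re := by
  simpa [inner_sub_left] using ((le_def T T').mp h).re_inner_nonneg_left x

variable [CompleteSpace E] {P : E →L[ℂ] E}

lemma IsStarProjection.re_inner_conj_apply (hP : IsStarProjection P) (T : E →L[ℂ] E) (x : E) :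
    (⟪(P * T * P) x, x⟫_ℂ).re = (⟪T (P x), P x⟫_ℂ).re := by
  rw [mul_apply_eq_comp, mul_apply_eq_comp, hP.isSelfAdjoint.inner_apply_left]

lemma IsStarProjection.re_inner_smul_apply (hP : IsStarProjection P) (r : ℝ) (x : E) :
    (⟪(r • P) x, x⟫_ℂ).re = r * ‖P x‖ ^ 2 := by
  have hPx : ⟪P x, x⟫_ℂ = ⟪P x, P x⟫_ℂ := by
    rw [← hP.isSelfAdjoint.inner_apply_left, ← mul_apply_eq_comp, hP.isIdempotentElem.eq]
  rw [smul_apply, re_inner_real_smul_left, hPx, re_inner_self_eq_norm_sq]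

lemma IsStarProjection.re_inner_apply_le_of_conj_le (hP : IsStarProjection P) {T : E →L[ℂ] E}
    {μ : ℝ} (h : P * T * P ≤ μ • P) (x : E) : (⟪T (P x), P x⟫_ℂ).re ≤ μ * ‖P x‖ ^ 2 := by
  simpa only [hP.re_inner_conj_apply, hP.re_inner_smul_apply] using re_inner_apply_le_of_le h x

lemma IsStarProjection.le_re_inner_apply_of_le_conj (hP : IsStarProjection P) {T : E →L[ℂ] E}
    {μ : ℝ} (h : μ • P ≤ P * T * P) (x : E) : μ * ‖P x‖ ^ 2 ≤ (⟪T (P x), P x⟫_ℂ).re := by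
  simpa only [hP.re_inner_conj_apply, hP.re_inner_smul_apply] using re_inner_apply_le_of_le h x

theorem IsSelfAdjoint.isUnit_of_definite_on_complements {S : E →L[ℂ] E} (hS : IsSelfAdjoint S)
    (hP : IsStarProjection P) {ε : ℝ} (hε : 0 < ε)
    (hpos : ∀ x, ε * ‖P x‖ ^ 2 ≤ (⟪S (P x), P x⟫_ℂ).re)
    (hneg : ∀ x, ε * ‖(1 - P) x‖ ^ 2 ≤ -(⟪S ((1 - P) x), (1 - P) x⟫_ℂ).re) : IsUnit S := by
  set J : E →L[ℂ] E := P - (1 - P)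
  have hJsa : IsSelfAdjoint J := hP.isSelfAdjoint.sub hP.one_sub.isSelfAdjoint
  have hJJ : J * J = 1 := by
    simp only [J, sub_mul, mul_sub, one_mul, mul_one, hP.isIdempotentElem.eq]
    abel
  have hcoercive (x : E) : ‖x‖ ^ 2 * ε ≤ ‖⟪(J * S) x, x⟫_ℂ‖ := by
    obtain ⟨u, v, hu, hv⟩ : ∃ u v, u = P x ∧ v = (1 - P) x := ⟨_, _, rfl, rfl⟩
    have hx : x = u + v := by simp [hu, hv]
    have hJx : J x = u - v := by simp [J, hu, hv]
    have huv : ⟪u, v⟫_ℂ = 0 := by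
      rw [hu, hP.isSelfAdjoint.inner_apply_left x v, hv]
      simp [← mul_apply_eq_comp, hP.isIdempotentElem.eq]
    have hnorm : ‖x‖ ^ 2 = ‖u‖ ^ 2 + ‖v‖ ^ 2 := by
      simpa only [← hx, ← sq] using norm_add_sq_eq_norm_sq_add_norm_sq_of_inner_eq_zero u v huv
    have hcross : (⟪S v, u⟫_ℂ).re = (⟪S u, v⟫_ℂ).re := by
      rw [hS.inner_apply_left v u]
      exact inner_re_symm (𝕜 := ℂ) _ _
    calc ‖x‖ ^ 2 * ε ≤ (⟪S u, u⟫_ℂ).re - (⟪S v, v⟫_ℂ).re := by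
          nlinarith [hu ▸ hpos x, hv ▸ hneg x]
      _ = (⟪S x, J x⟫_ℂ).re := by
        rw [hJx, hx]
        simp only [map_add, inner_add_left, inner_sub_right, Complex.add_re, Complex.sub_re, hcross]
        ring
      _ = (⟪(J * S) x, x⟫_ℂ).re := by rw [mul_apply_eq_comp, hJsa.inner_apply_left]
      _ ≤ ‖⟪(J * S) x, x⟫_ℂ‖ := Complex.re_le_norm _
  have hJS : IsUnit (J * S) := isUnit_of_forall_le_norm_inner_map _ (c := ⟨ε, hε.le⟩) hε hcoercive
  have hJ : IsUnit J := ⟨⟨J, J, hJJ, hJJ⟩, rfl⟩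
  simpa [← mul_assoc, hJJ] using hJ.mul hJS

end Hilbert

lemma exists_continuous_eq_one_of_le_eq_zero_of_ge {μ₁ μ₂ : ℝ} (hμ : μ₁ < μ₂) :
    ∃ f : ℝ → ℝ, Continuous f ∧ (∀ t ≤ μ₁, f t = 1) ∧ ∀ t, μ₂ ≤ t → f t = 0 := by
  refine ⟨fun t => max 0 (min 1 ((μ₂ - t) / (μ₂ - μ₁))), by fun_prop, fun t ht => ?_,
    fun t ht => ?_⟩
  · have : 1 ≤ (μ₂ - t) / (μ₂ - μ₁) := (one_le_div (by linarith)).mpr (by linarith)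
    simp [this]
  · have : (μ₂ - t) / (μ₂ - μ₁) ≤ 0 := div_nonpos_of_nonpos_of_nonneg (by linarith) (by linarith)
    simp [this]

section Spectral

variable {E : Type*} [NormedAddCommGroup E] [InnerProductSpace ℂ E] [CompleteSpace E]

theorem IsSelfAdjoint.exists_isStarProjection_of_spectrum_gap {A : E →L[ℂ] E}
    (hA : IsSelfAdjoint A) {μ₁ μ₂ : ℝ} (hμ : μ₁ < μ₂) (hgap : Set.Ioo μ₁ μ₂ ∩ spectrum ℝ A = ∅) :
    ∃ P : E →L[ℂ] E, IsStarProjection P ∧ P * A * P ≤ μ₁ • P ∧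
      μ₂ • (1 - P) ≤ (1 - P) * A * (1 - P) := by
  obtain ⟨f, hf, hf₁, hf₀⟩ := exists_continuous_eq_one_of_le_eq_zero_of_ge hμ
  have hf_spec : ∀ t ∈ spectrum ℝ A, (f t = 1 ∧ t ≤ μ₁) ∨ (f t = 0 ∧ μ₂ ≤ t) := by
    intro t ht
    rcases le_or_gt t μ₁ with h₁ | h₁
    · exact .inl ⟨hf₁ t h₁, h₁⟩
    · have h₂ : μ₂ ≤ t := le_of_not_gt fun h₂ =>
        (Set.eq_empty_iff_forall_notMem.mp hgap) t ⟨⟨h₁, h₂⟩, ht⟩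
      exact .inr ⟨hf₀ t h₂, h₂⟩
  have hconj (g : ℝ → ℝ) (hg : Continuous g) :
      cfc g A * A * cfc g A = cfc (fun t => g t * t * g t) A := by
    rw [cfc_mul (fun t => g t * t) g A (by fun_prop) hg.continuousOn,
      cfc_mul g (fun t : ℝ => t) A hg.continuousOn, cfc_id' ℝ A]
  have hidem : IsIdempotentElem (cfc f A) := by
    rw [IsIdempotentElem, ← cfc_mul f f A hf.continuousOn hf.continuousOn]
    exact cfc_congr fun t ht => by rcases hf_spec t ht with ⟨h, -⟩ | ⟨h, -⟩ <;> simp [h]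
  have hQ : 1 - cfc f A = cfc (fun t => 1 - f t) A := by
    rw [cfc_sub (fun _ => (1 : ℝ)) f A continuousOn_const hf.continuousOn, cfc_const_one ℝ A]
  refine ⟨cfc f A, ⟨hidem, cfc_predicate f A⟩, ?_, ?_⟩
  · rw [hconj f hf, ← cfc_smul μ₁ f A hf.continuousOn,
      cfc_le_iff (fun t => f t * t * f t) (fun t => μ₁ • f t) A]
    intro t ht
    rcases hf_spec t ht with ⟨h, h'⟩ | ⟨h, -⟩
    · simpa [h] using h'
    · simp [h]
  · have hg : Continuous fun t => 1 - f t := by fun_prop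
    rw [hQ, hconj _ hg, ← cfc_smul μ₂ _ A hg.continuousOn,
      cfc_le_iff (fun t => μ₂ • (1 - f t)) (fun t => (1 - f t) * t * (1 - f t)) A]
    intro t ht
    rcases hf_spec t ht with ⟨h, -⟩ | ⟨h, h'⟩
    · simp [h]
    · simpa [h] using h'

theorem IsSelfAdjoint.resolvent_bounds_of_spectrum_le {C : E →L[ℂ] E} (hC : IsSelfAdjoint C)
    {c lam : ℝ} (hspec : ∀ t ∈ spectrum ℝ C, t ≤ c) (hlam : c < lam) :
    IsUnit (algebraMap ℝ (E →L[ℂ] E) lam - C) ∧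
      0 ≤ Ring.inverse (algebraMap ℝ (E →L[ℂ] E) lam - C) ∧
      (lam - c) • Ring.inverse (algebraMap ℝ (E →L[ℂ] E) lam - C) ≤ 1 := by
  have hpos : ∀ t ∈ spectrum ℝ C, 0 < lam - t := fun t ht => by linarith [hspec t ht]
  have hcont : ContinuousOn (fun t => (lam - t)⁻¹) (spectrum ℝ C) :=
    ContinuousOn.inv₀ (by fun_prop) fun t ht => (hpos t ht).ne'
  have hD : algebraMap ℝ (E →L[ℂ] E) lam - C = cfc (fun t => lam - t) C := by
    rw [cfc_sub (fun _ => lam) (fun t => t) C, cfc_const lam C, cfc_id' ℝ C]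
  have hR : Ring.inverse (algebraMap ℝ (E →L[ℂ] E) lam - C) = cfc (fun t => (lam - t)⁻¹) C := by
    rw [hD, cfc_inv _ C fun t ht => (hpos t ht).ne']
  refine ⟨hD ▸ isUnit_cfc _ C (by fun_prop) hC fun t ht => (hpos t ht).ne', ?_, ?_⟩
  · exact hR ▸ cfc_nonneg fun t ht => (inv_pos.mpr (hpos t ht)).le
  · rw [hR, ← cfc_smul (lam - c) _ C hcont]
    refine cfc_le_one _ C fun t ht => ?_
    rw [smul_eq_mul, ← div_eq_mul_inv, div_le_one (hpos t ht)]
    linarith [hspec t ht]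

theorem IsSelfAdjoint.nonneg_affine_of_mem_spectrum {T : E →L[ℂ] E} (hT : IsSelfAdjoint T)
    {a b : ℝ} (h : ∀ x, 0 ≤ a * (⟪T x, x⟫_ℂ).re + b * ‖x‖ ^ 2) {t : ℝ} (ht : t ∈ spectrum ℝ T) :
    0 ≤ a * t + b := by
  have hcfc : cfc (fun s => a * s + b) T = a • T + algebraMap ℝ (E →L[ℂ] E) b := by
    rw [cfc_add_const b (fun s => a * s) T, cfc_const_mul_id a T]
  have hpos : 0 ≤ a • T + algebraMap ℝ (E →L[ℂ] E) b := by
    refine (nonneg_iff_isPositive _).mpr (isPositive_def'.mpr ⟨?_, fun x => ?_⟩)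
    · exact ((IsSelfAdjoint.all a).smul hT).add ((IsSelfAdjoint.all b).algebraMap _)
    · simpa only [reApplyInnerSelf, RCLike.re_to_complex, add_apply, smul_apply,
        ContinuousLinearMap.algebraMap_apply, inner_add_left, Complex.add_re,
        re_inner_real_smul_left, re_inner_self_eq_norm_sq] using h x
  exact (cfc_nonneg_iff (fun s => a * s + b) T).mp (hcfc ▸ hpos) t ht

end Spectral

lemma le_add_sqrt_of_nonneg_affine {a b c μ : ℝ} (h : 0 ≤ a * μ + b) :
    μ ≤ (μ + c + 2 * a) / 2 + √(((μ - c) / 2) ^ 2 + a * (a + c) + b) := by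
  have := Real.abs_le_sqrt (x := (μ - c - 2 * a) / 2) (y := ((μ - c) / 2) ^ 2 + a * (a + c) + b)
    (by nlinarith)
  linarith [le_abs_self ((μ - c - 2 * a) / 2)]

lemma add_sqrt_le_of_nonneg_affine {a b c μ : ℝ} (hc : c ≤ μ) (h : 0 ≤ a * μ + b) :
    (μ + c) / 2 + √(((μ - c) / 2) ^ 2 - (a * μ + b)) ≤ μ := by
  have : √(((μ - c) / 2) ^ 2 - (a * μ + b)) ≤ (μ - c) / 2 := by
    calc √(((μ - c) / 2) ^ 2 - (a * μ + b)) ≤ √(((μ - c) / 2) ^ 2) :=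
          Real.sqrt_le_sqrt (by linarith)
      _ = (μ - c) / 2 := Real.sqrt_sq (by linarith)
  linarith

lemma sub_mul_sub_sub_pos_of_add_sqrt_lt {a b c μ lam : ℝ} (ha : 0 ≤ a) (hμ : μ ≤ lam)
    (h : (μ + c + 2 * a) / 2 + √(((μ - c) / 2) ^ 2 + a * (a + c) + b) < lam) :
    0 < (lam - μ) * (lam - c) - (a * μ + b) := by
  have hpos : 0 < lam - (μ + c + 2 * a) / 2 := by
    linarith [Real.sqrt_nonneg (((μ - c) / 2) ^ 2 + a * (a + c) + b)]
  have hsq : ((μ - c) / 2) ^ 2 + a * (a + c) + b < (lam - (μ + c + 2 * a) / 2) ^ 2 :=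
    (Real.sqrt_lt' hpos).mp (by linarith)
  nlinarith [mul_nonneg ha (sub_nonneg.mpr hμ)]

section Schur

lemma algebraMap_sub_blockOp (A : H₁ →L[ℂ] H₁) (B : H₂ →L[ℂ] H₁) (C : H₂ →L[ℂ] H₂) (r : ℝ) :
    algebraMap ℝ _ r - blockOp A B C = blockMatrix (algebraMap ℝ _ r - A) (-B) (-adjoint B)
      (algebraMap ℝ _ r - C) :=
  ext_withLp_prod (fun z => by simp [blockOp]; abel) (fun z => by simp [blockOp]; abel)

variable {A : H₁ →L[ℂ] H₁} {B : H₂ →L[ℂ] H₁} {R : H₂ →L[ℂ] H₂} {lam : ℝ}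

lemma re_inner_schur_apply (u : H₁) :
    (⟪(algebraMap ℝ (H₁ →L[ℂ] H₁) lam - A - B ∘L R ∘L adjoint B) u, u⟫_ℂ).re =
      lam * ‖u‖ ^ 2 - (⟪A u, u⟫_ℂ).re - (⟪R (adjoint B u), adjoint B u⟫_ℂ).re := by
  simp only [sub_apply, ContinuousLinearMap.algebraMap_apply, comp_apply, inner_sub_left,
    Complex.sub_re, re_inner_real_smul_left, re_inner_self_eq_norm_sq, ← adjoint_inner_right B]

lemma le_re_inner_schur {a b c μ : ℝ} (ha : 0 ≤ a)
    (hab : ∀ x : H₁, ‖adjoint B x‖ ^ 2 ≤ a * (⟪A x, x⟫_ℂ).re + b * ‖x‖ ^ 2)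
    (hR : (lam - c) • R ≤ 1) (hlam : c < lam) {u : H₁} (hu : (⟪A u, u⟫_ℂ).re ≤ μ * ‖u‖ ^ 2) :
    ((lam - μ) * (lam - c) - (a * μ + b)) * ‖u‖ ^ 2 ≤
      (lam - c) * (⟪(algebraMap ℝ (H₁ →L[ℂ] H₁) lam - A - B ∘L R ∘L adjoint B) u, u⟫_ℂ).re := by
  have hRu : (lam - c) * (⟪R (adjoint B u), adjoint B u⟫_ℂ).re ≤ ‖adjoint B u‖ ^ 2 := by
    simpa only [smul_apply, one_apply_eq_self, re_inner_real_smul_left, re_inner_self_eq_norm_sq]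
      using re_inner_apply_le_of_le hR (adjoint B u)
  rw [re_inner_schur_apply]
  nlinarith [hab u, mul_le_mul_of_nonneg_left hu (by linarith : 0 ≤ lam - c + a)]

lemma re_inner_schur_le {μ : ℝ} (hR : 0 ≤ R) {v : H₁} (hv : μ * ‖v‖ ^ 2 ≤ (⟪A v, v⟫_ℂ).re) :
    (⟪(algebraMap ℝ (H₁ →L[ℂ] H₁) lam - A - B ∘L R ∘L adjoint B) v, v⟫_ℂ).re ≤
      (lam - μ) * ‖v‖ ^ 2 := by
  have hRv : 0 ≤ (⟪R (adjoint B v), adjoint B v⟫_ℂ).re :=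
    ((nonneg_iff_isPositive R).mp hR).re_inner_nonneg_left (adjoint B v)
  rw [re_inner_schur_apply]
  linarith

theorem isUnit_schur_of_definite_on_complements {P : H₁ →L[ℂ] H₁} {a b c μ₁ μ₂ : ℝ}
    (hA : IsSelfAdjoint A) (ha : 0 ≤ a)
    (hab : ∀ x : H₁, ‖adjoint B x‖ ^ 2 ≤ a * (⟪A x, x⟫_ℂ).re + b * ‖x‖ ^ 2)
    (hP : IsStarProjection P) (hPA : ∀ x, (⟪A (P x), P x⟫_ℂ).re ≤ μ₁ * ‖P x‖ ^ 2)
    (hQA : ∀ x, μ₂ * ‖(1 - P) x‖ ^ 2 ≤ (⟪A ((1 - P) x), (1 - P) x⟫_ℂ).re)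
    (hR : 0 ≤ R) (hRc : (lam - c) • R ≤ 1) (hlam : c < lam) (hlam₂ : lam < μ₂)
    (hq : 0 < (lam - μ₁) * (lam - c) - (a * μ₁ + b)) :
    IsUnit (algebraMap ℝ (H₁ →L[ℂ] H₁) lam - A - B ∘L R ∘L adjoint B) := by
  have hS : IsSelfAdjoint (algebraMap ℝ (H₁ →L[ℂ] H₁) lam - A - B ∘L R ∘L adjoint B) :=
    (((IsSelfAdjoint.all lam).algebraMap _).sub hA).sub
      ((IsSelfAdjoint.of_nonneg hR).conj_adjoint B)
  have hlc : 0 < lam - c := by linarith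
  refine hS.isUnit_of_definite_on_complements hP
    (lt_min (div_pos hq hlc) (by linarith : 0 < μ₂ - lam)) (fun x => ?_) (fun x => ?_)
  · calc min _ _ * ‖P x‖ ^ 2 ≤ ((lam - μ₁) * (lam - c) - (a * μ₁ + b)) / (lam - c) * ‖P x‖ ^ 2 := by
          gcongr; exact min_le_left _ _
      _ ≤ _ := by
        rw [div_mul_eq_mul_div, div_le_iff₀ hlc]
        linarith [le_re_inner_schur ha hab hRc hlam (hPA x)]
  · calc min _ _ * ‖(1 - P) x‖ ^ 2 ≤ (μ₂ - lam) * ‖(1 - P) x‖ ^ 2 := by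
          gcongr; exact min_le_right _ _
      _ ≤ _ := by linarith [re_inner_schur_le (B := B) (lam := lam) hR (hQA x)]

end Schur

theorem spectral_free_interval_cor23
    (A : H₁ →L[ℂ] H₁) (hA : IsSelfAdjoint A)
    (C : H₂ →L[ℂ] H₂) (hC : IsSelfAdjoint C) (B : H₂ →L[ℂ] H₁)
    (a b : ℝ) (ha : 0 ≤ a)
    (hab : ∀ x : H₁, ‖ContinuousLinearMap.adjoint B x‖ ^ 2 ≤
      a * (inner ℂ (A x) x : ℂ).re + b * ‖x‖ ^ 2)
    (c : ℝ) (hc : c = sSup (spectrum ℝ C))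
    (μ₁ μ₂ : ℝ) (hμ₁ : μ₁ ∈ spectrum ℝ A)
    (hca : a + c < μ₁) (hμ₁₂ : μ₁ < μ₂)
    (hgap : Set.Ioo μ₁ μ₂ ∩ spectrum ℝ A = ∅)
    (α₁p β₂p : ℝ)
    (hα₁p : α₁p = (μ₁ + c + 2 * a) / 2 + Real.sqrt (((μ₁ - c) / 2) ^ 2 + a * (a + c) + b))
    (hβ₂p : β₂p = (μ₂ + c) / 2 + Real.sqrt (((μ₂ - c) / 2) ^ 2 - (a * μ₂ + b)))
    (h2 : α₁p < β₂p) :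
    μ₁ ≤ α₁p ∧ α₁p < β₂p ∧ β₂p ≤ μ₂ ∧
      ∀ lam : ℝ, α₁p < lam → lam < β₂p → lam ∉ spectrum ℝ (blockOp A B C) := by
  have hspecC : ∀ t ∈ spectrum ℝ C, t ≤ c :=
    fun t ht => hc ▸ le_csSup (spectrum.isBounded C).bddAbove ht
  have hμ₁b : 0 ≤ a * μ₁ + b :=
    hA.nonneg_affine_of_mem_spectrum (fun x => (sq_nonneg _).trans (hab x)) hμ₁
  have hα : μ₁ ≤ α₁p := hα₁p ▸ le_add_sqrt_of_nonneg_affine hμ₁b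
  have hβ : β₂p ≤ μ₂ := hβ₂p ▸ add_sqrt_le_of_nonneg_affine (by linarith) (by nlinarith)
  refine ⟨hα, h2, hβ, fun lam hlow hhigh => ?_⟩
  obtain ⟨P, hP, hPA, hQA⟩ := hA.exists_isStarProjection_of_spectrum_gap hμ₁₂ hgap
  obtain ⟨hD, hR, hRc⟩ := hC.resolvent_bounds_of_spectrum_le hspecC (by linarith : c < lam)
  rw [spectrum.notMem_iff, algebraMap_sub_blockOp]
  refine isUnit_blockMatrix_of_isUnit_schur hD ?_
  simpa [neg_comp, comp_neg, sub_sub] using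
    isUnit_schur_of_definite_on_complements hA ha hab hP (hP.re_inner_apply_le_of_conj_le hPA)
      (hP.one_sub.le_re_inner_apply_of_le_conj hQA) hR hRc (by linarith) (by linarith)
      (sub_mul_sub_sub_pos_of_add_sqrt_lt ha (by linarith) (hα₁p ▸ hlow))
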